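/- arXiv:2301.02306 — 3 statements merged into one kernel-verified Lean document; each statement's English description precedes it below -/
import Mathlib

section
/- Let S be any real-valued random variable, c any real constant, Δ > 0, and W ~ Unif([0, KΔ]) for a positive integer K, with W independent of S. Then W₀ := (cS + W) mod Δ is uniformly distributed on [0, Δ] and is independent of S. -/
open MeasureTheory ProbabilityTheory

/-- Real modulo operation: `rmod x a ∈ [0,a)` for `a > 0`. -/
noncomputable def rmod (x a : ℝ) : ℝ := x - a * ⌊x / a⌋

/-!
Conditionally on `S = s`, the variable `rmod (c * S + W) Δ` is `rmod (c * s + W) Δ`. Since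
`rmod · Δ` is `Δ`-periodic and every interval `(a, a + Δ]` is a fundamental domain of `Δℤ`, the
image of Lebesgue measure on `(a, a + Δ]` under it does not depend on `a`, and for `a = 0` it is
Lebesgue measure on `(0, Δ]` itself. The shifted interval `(c * s, c * s + KΔ]` is the union of `K`
such periods, so the conditional law is uniform on `[0, Δ]` whatever `s` is; a conditional law
that does not depend on the condition gives both the law of the variable and its independence
from `S`.
-/

open scoped ENNReal
open Set Function

section IndependentNoise

variable {Ω α β γ : Type*} [MeasurableSpace Ω] [MeasurableSpace α] [MeasurableSpace β]
  [MeasurableSpace γ]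

theorem MeasureTheory.Measure.map_prod_eq_prod_of_forall_map_eq (μ : Measure α) [SigmaFinite μ]
    (ν : Measure β) [SFinite ν] {f : α → β → γ} (hf : Measurable (uncurry f))
    {ρ : Measure γ} [SigmaFinite ρ] (h : ∀ x, ν.map (f x) = ρ) :
    (μ.prod ν).map (fun p => (p.1, f p.1 p.2)) = μ.prod ρ := by
  have hg : Measurable fun p : α × β => (p.1, f p.1 p.2) := measurable_fst.prodMk hf
  refine (Measure.prod_eq fun s t hs ht => ?_).symm
  have hsection : ∀ x, ν (Prod.mk x ⁻¹' ((fun p => (p.1, f p.1 p.2)) ⁻¹' s ×ˢ t))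
      = s.indicator (fun _ => ρ t) x := by
    intro x
    by_cases hx : x ∈ s
    · rw [indicator_of_mem hx, ← h x,
        Measure.map_apply (show Measurable (f x) from hf.comp measurable_prodMk_left) ht]
      congr 1
      ext y
      simp [hx]
    · rw [indicator_of_notMem hx, ← measure_empty (μ := ν)]
      congr 1
      ext y
      simp [hx]
  rw [Measure.map_apply hg (hs.prod ht), Measure.prod_apply (hg (hs.prod ht)),
    lintegral_congr hsection, lintegral_indicator_const hs, mul_comm]

theorem ProbabilityTheory.IndepFun.map_eq_and_indepFun_of_forall_map_eq {P : Measure Ω}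
    [IsProbabilityMeasure P] {X : Ω → α} {Y : Ω → β} (hX : Measurable X) (hY : Measurable Y)
    (hXY : IndepFun X Y P) {f : α → β → γ} (hf : Measurable (uncurry f))
    {ρ : Measure γ} [SigmaFinite ρ] (h : ∀ x, (P.map Y).map (f x) = ρ) :
    P.map (fun ω => f (X ω) (Y ω)) = ρ ∧ IndepFun (fun ω => f (X ω) (Y ω)) X P := by
  have hZ : Measurable fun ω => f (X ω) (Y ω) := hf.comp (hX.prodMk hY)
  have : IsProbabilityMeasure (P.map X) := Measure.isProbabilityMeasure_map hX.aemeasurable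
  have hjoint : P.map (fun ω => (X ω, f (X ω) (Y ω))) = (P.map X).prod ρ := by
    have hXY' := (indepFun_iff_map_prod_eq_prod_map_map hX.aemeasurable hY.aemeasurable).mp hXY
    rw [← Measure.map_prod_eq_prod_of_forall_map_eq _ _ hf h, ← hXY',
      Measure.map_map (measurable_fst.prodMk hf : Measurable fun p : α × β => (p.1, f p.1 p.2))
        (hX.prodMk hY)]
    rfl
  have hlaw : P.map (fun ω => f (X ω) (Y ω)) = ρ := by
    have hsnd := congrArg (Measure.map Prod.snd) hjoint
    rwa [Measure.map_map measurable_snd (hX.prodMk hZ), Measure.map_snd_prod, measure_univ,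
      one_smul] at hsnd
  refine ⟨hlaw, IndepFun.symm ?_⟩
  rw [indepFun_iff_map_prod_eq_prod_map_map hX.aemeasurable hZ.aemeasurable, hlaw, hjoint]

end IndependentNoise

namespace Function.Periodic

variable {α : Type*} [MeasurableSpace α] {f : ℝ → α} {T : ℝ}

theorem map_restrict_Ioc_eq (hf : Periodic f T) (hfm : Measurable f) (hT : 0 < T) (a b : ℝ) :
    (volume.restrict (Ioc a (a + T))).map f = (volume.restrict (Ioc b (b + T))).map f := by
  ext s hs
  rw [Measure.map_apply hfm hs, Measure.map_apply hfm hs, Measure.restrict_apply (hfm hs),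
    Measure.restrict_apply (hfm hs)]
  refine (isAddFundamentalDomain_Ioc hT a).measure_set_eq (isAddFundamentalDomain_Ioc hT b)
    (hfm hs) ?_
  rintro ⟨_, n, rfl⟩
  ext x
  simp [AddSubgroup.vadd_def, add_comm _ x, hf.int_mul n x]

theorem map_restrict_Ioc_add_nat_mul (hf : Periodic f T) (hfm : Measurable f) (hT : 0 < T)
    (a : ℝ) (n : ℕ) :
    (volume.restrict (Ioc a (a + n * T))).map f = n • (volume.restrict (Ioc 0 T)).map f := by
  induction n with
  | zero => simp
  | succ n ih =>
    have hnT : 0 ≤ n * T := by positivity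
    have hsplit : Ioc a (a + n * T) ∪ Ioc (a + n * T) (a + n * T + T)
        = Ioc a (a + (n + 1 : ℕ) * T) := by
      rw [Ioc_union_Ioc_eq_Ioc (by linarith) (by linarith)]
      push_cast
      ring_nf
    rw [← hsplit, Measure.restrict_union (Ioc_disjoint_Ioc_of_le le_rfl) measurableSet_Ioc,
      Measure.map_add _ _ hfm, ih, hf.map_restrict_Ioc_eq hfm hT (a + n * T) 0, zero_add,
      succ_nsmul]

end Function.Periodic

theorem periodic_rmod (Δ : ℝ) : Periodic (rmod · Δ) Δ := by
  intro x
  rcases eq_or_ne Δ 0 with rfl | hΔ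
  · simp [rmod]
  · simp only [rmod, add_div, div_self hΔ, Int.floor_add_one]
    push_cast
    ring

theorem measurable_rmod (Δ : ℝ) : Measurable (rmod · Δ) := by
  unfold rmod
  fun_prop

theorem rmod_eq_self {x Δ : ℝ} (hx : x ∈ Ico 0 Δ) : rmod x Δ = x := by
  have hΔ : 0 < Δ := hx.1.trans_lt hx.2
  have hfloor : ⌊x / Δ⌋ = 0 :=
    Int.floor_eq_zero_iff.mpr ⟨div_nonneg hx.1 hΔ.le, (div_lt_one hΔ).mpr hx.2⟩
  simp [rmod, hfloor]

theorem map_rmod_restrict_Ioc (Δ : ℝ) :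
    (volume.restrict (Ioc 0 Δ)).map (rmod · Δ) = volume.restrict (Ioc 0 Δ) := by
  rw [← Measure.restrict_congr_set Ioo_ae_eq_Ioc]
  exact (Measure.map_congr (ae_restrict_of_forall_mem measurableSet_Ioo
    fun x hx => rmod_eq_self ⟨hx.1.le, hx.2⟩)).trans Measure.map_id

theorem map_const_add_volume_restrict_Ioc (t L : ℝ) :
    (volume.restrict (Ioc 0 L)).map (t + ·) = volume.restrict (Ioc t (t + L)) := by
  have hpre : Ioc 0 L = (t + ·) ⁻¹' Ioc t (t + L) := by
    rw [preimage_const_add_Ioc, sub_self, add_sub_cancel_left]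
  rw [hpre, ← Measure.restrict_map (measurable_const_add t) measurableSet_Ioc,
    map_add_left_eq_self]

theorem map_cond_Icc_rmod_add {Δ : ℝ} (hΔ : 0 < Δ) {K : ℕ} (hK : 0 < K) (t : ℝ) :
    (volume[|Icc 0 (K * Δ)]).map (fun w => rmod (t + w) Δ) = volume[|Icc 0 Δ] := by
  have hK' : (K : ℝ≥0∞) ≠ 0 := by exact_mod_cast hK.ne'
  have hmass : (volume (Icc 0 (K * Δ)))⁻¹ * K = (volume (Icc 0 Δ))⁻¹ := by
    rw [Real.volume_Icc, Real.volume_Icc, sub_zero, sub_zero,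
      ENNReal.ofReal_mul (Nat.cast_nonneg K), ENNReal.ofReal_natCast,
      ENNReal.mul_inv (Or.inl hK') (Or.inl (ENNReal.natCast_ne_top K)),
      mul_right_comm, ENNReal.inv_mul_cancel hK' (ENNReal.natCast_ne_top K), one_mul]
  rw [ProbabilityTheory.cond, ProbabilityTheory.cond, Measure.map_smul,
    Measure.restrict_congr_set Ioc_ae_eq_Icc.symm, Measure.restrict_congr_set Ioc_ae_eq_Icc.symm,
    show (fun w => rmod (t + w) Δ) = (rmod · Δ) ∘ (t + ·) from rfl,
    ← Measure.map_map (measurable_rmod Δ) (measurable_const_add t),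
    map_const_add_volume_restrict_Ioc,
    (periodic_rmod Δ).map_restrict_Ioc_add_nat_mul (measurable_rmod Δ) hΔ, map_rmod_restrict_Ioc,
    ← Nat.cast_smul_eq_nsmul ℝ≥0∞, smul_smul, hmass]

/-- Crypto Lemma instance: dithering with a uniform over a period `KΔ` and reducing
modulo `Δ` yields a uniform on `[0,Δ]` independent of `S`. -/
theorem crypto_lemma_mod
    {Ω : Type*} [MeasurableSpace Ω] (P : Measure Ω) [IsProbabilityMeasure P]
    (Δ : ℝ) (hΔ : 0 < Δ) (K : ℕ) (hK : 0 < K) (c : ℝ)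
    (S W : Ω → ℝ) (hS : Measurable S) (hW : Measurable W)
    (hWdist : pdf.IsUniform W (Set.Icc 0 ((K:ℝ) * Δ)) P)
    (hindep : IndepFun S W P) :
    pdf.IsUniform (fun ω => rmod (c * S ω + W ω) Δ) (Set.Icc 0 Δ) P ∧
    IndepFun (fun ω => rmod (c * S ω + W ω) Δ) S P := by
  have hWlaw : P.map W = volume[|Icc 0 (K * Δ)] := hWdist
  have hf : Measurable (uncurry fun s w => rmod (c * s + w) Δ) :=
    (measurable_rmod Δ).comp ((measurable_fst.const_mul c).add measurable_snd)
  exact hindep.map_eq_and_indepFun_of_forall_map_eq hS hW hf fun s => by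
    rw [hWlaw]
    exact map_cond_Icc_rmod_add hΔ hK (c * s)
end

section
/- With the setup of the previous statement, the function α ↦ ((1-α)²·V_X·V_S + σ²·V_X + α²·σ²·V_S) / (V_X + V_S + σ²) is minimized over α ∈ ℝ at α* = V_X/(V_X + σ²), and the minimum value is V_X·σ²/(V_X + σ²) (independent of V_S, provided V_S ≥ 0). -/
/-! Multiplying out by `(V_X + σ²)`, the risk at `α` exceeds `V_X σ² / (V_X + σ²)` by
`V_S (α (V_X + σ²) - V_X)² / ((V_X + σ²)(V_X + V_S + σ²))`, a square vanishing exactly at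
`α = V_X / (V_X + σ²)`. -/

section

variable {a b s : ℝ}

theorem lmmse_numerator_mul_eq (α : ℝ) :
    ((1 - α) ^ 2 * a * b + s * a + α ^ 2 * s * b) * (a + s) =
      a * s * (a + b + s) + b * (α * (a + s) - a) ^ 2 := by
  ring

theorem lmmse_eq_add_excess (ha : 0 < a + s) (hb : 0 < a + b + s) (α : ℝ) :
    ((1 - α) ^ 2 * a * b + s * a + α ^ 2 * s * b) / (a + b + s) =
      a * s / (a + s) + b * (α * (a + s) - a) ^ 2 / ((a + s) * (a + b + s)) := by
  rw [div_add_div _ _ ha.ne' (mul_pos ha hb).ne', div_eq_div_iff hb.ne' (by positivity)]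
  linear_combination (a + s) * (a + b + s) * lmmse_numerator_mul_eq α

end

theorem lmmse_min_over_alpha_general (VX VS σ : ℝ) (hVX : 0 < VX) (hVS : 0 ≤ VS) :
    (∀ α : ℝ,
      VX * σ^2 / (VX + σ^2)
        ≤ ((1 - α)^2 * VX * VS + σ^2 * VX + α^2 * σ^2 * VS) / (VX + VS + σ^2)) ∧
    ((1 - VX / (VX + σ^2))^2 * VX * VS + σ^2 * VX + (VX / (VX + σ^2))^2 * σ^2 * VS)
        / (VX + VS + σ^2)
      = VX * σ^2 / (VX + σ^2) := by
  have hs : 0 < VX + σ ^ 2 := by positivity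
  have htot : 0 < VX + VS + σ ^ 2 := by positivity
  refine ⟨fun α => ?_, ?_⟩
  · rw [lmmse_eq_add_excess hs htot]
    exact le_add_of_nonneg_right (by positivity)
  · have hopt : VX / (VX + σ ^ 2) * (VX + σ ^ 2) - VX = 0 := by
      rw [div_mul_cancel₀ _ hs.ne', sub_self]
    rw [lmmse_eq_add_excess hs htot, hopt]
    simp

theorem lmmse_min_over_alpha (VX VS σ : ℝ) (hVX : 0 < VX) (hVS : 0 ≤ VS) (hσ : 0 < σ) :
    (∀ α : ℝ,
      VX * σ^2 / (VX + σ^2)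
        ≤ ((1 - α)^2 * VX * VS + σ^2 * VX + α^2 * σ^2 * VS) / (VX + VS + σ^2)) ∧
    ((1 - VX / (VX + σ^2))^2 * VX * VS + σ^2 * VX + (VX / (VX + σ^2))^2 * σ^2 * VS)
        / (VX + VS + σ^2)
      = VX * σ^2 / (VX + σ^2) :=
  lmmse_min_over_alpha_general VX VS σ hVX hVS
end

section
/- Let δ > 0, m ≥ 2 an integer, 𝒯 = {0, δ, ..., (m-1)δ}, 𝒮 ⊆ {jδ : j ∈ ℕ}, and φ(t,s) = ((t + (m-1)s) mod (mδ)) + s. Then for every u in the image of φ, the value of t is uniquely determined by u: that is, if φ(t₁,s₁) = φ(t₂,s₂) for t₁,t₂ ∈ 𝒯 and s₁,s₂ ∈ 𝒮, then t₁ = t₂. -/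
/-- The Scheme 2 mapping `φ(t,s) = ((t + (m-1)s) mod (mδ)) + s`. -/
noncomputable def phi (m : ℕ) (δ t s : ℝ) : ℝ := rmod (t + ((m:ℝ) - 1) * s) ((m:ℝ) * δ) + s

/-!
Reducing modulo `mδ` costs only a multiple of `mδ`, so
`φ(t, s) ≡ t + (m - 1)s + s = t + ms [PMOD mδ]`, and `ms` is a multiple of `mδ` when `s` is a
multiple of `δ`. Hence `φ(t, s) ≡ t [PMOD mδ]`: the receiver recovers `t` as the unique element of
`{0, δ, …, (m - 1)δ}` congruent to `u` modulo `mδ`.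
-/

open AddCommGroup

theorem rmod_modEq (x a : ℝ) : rmod x a ≡ x [PMOD a] :=
  modEq_iff_zsmul'.mpr ⟨⌊x / a⌋, by rw [rmod, zsmul_eq_mul]; ring⟩

theorem phi_intCast_mul_modEq (m : ℕ) (δ t : ℝ) (j : ℤ) :
    phi m δ t (j * δ) ≡ t [PMOD (m * δ)] := by
  have hφ : phi m δ t (j * δ) ≡ t + j • ((m : ℝ) * δ) [PMOD (m * δ)] := by
    convert (rmod_modEq (t + ((m : ℝ) - 1) * (j * δ)) (m * δ)).add_right ((j : ℝ) * δ) using 1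
    · rfl
    · rw [zsmul_eq_mul]; ring
  exact hφ.trans (add_zsmul_modEq j)

theorem natCast_mul_eq_of_modEq {m i₁ i₂ : ℕ} (hi₁ : i₁ < m) (hi₂ : i₂ < m) {δ : ℝ}
    (h : (i₁ : ℝ) * δ ≡ i₂ * δ [PMOD (m * δ)]) : (i₁ : ℝ) * δ = i₂ * δ := by
  rcases eq_or_ne δ 0 with rfl | hδ
  · simp
  rw [mul_modEq_mul_right hδ, mul_div_cancel_right₀ _ hδ, natCast_modEq_natCast] at h
  rw [h.eq_of_lt_of_lt hi₁ hi₂]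

theorem phi_determines_t_general (δ : ℝ) (m : ℕ)
    (t₁ t₂ s₁ s₂ : ℝ)
    (ht₁ : ∃ i : ℕ, i < m ∧ t₁ = (i:ℝ) * δ) (ht₂ : ∃ i : ℕ, i < m ∧ t₂ = (i:ℝ) * δ)
    (hs₁ : ∃ j : ℕ, s₁ = (j:ℝ) * δ) (hs₂ : ∃ j : ℕ, s₂ = (j:ℝ) * δ)
    (h : phi m δ t₁ s₁ = phi m δ t₂ s₂) :
    t₁ = t₂ := by
  obtain ⟨i₁, hi₁, rfl⟩ := ht₁
  obtain ⟨i₂, hi₂, rfl⟩ := ht₂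
  obtain ⟨j₁, rfl⟩ := hs₁
  obtain ⟨j₂, rfl⟩ := hs₂
  have h₁ := phi_intCast_mul_modEq m δ (i₁ * δ) j₁
  have h₂ := phi_intCast_mul_modEq m δ (i₂ * δ) j₂
  push_cast at h₁ h₂
  rw [h] at h₁
  exact natCast_mul_eq_of_modEq hi₁ hi₂ (h₁.symm.trans h₂)

theorem phi_determines_t (δ : ℝ) (hδ : 0 < δ) (m : ℕ) (hm : 2 ≤ m)
    (t₁ t₂ s₁ s₂ : ℝ)
    (ht₁ : ∃ i : ℕ, i < m ∧ t₁ = (i:ℝ) * δ) (ht₂ : ∃ i : ℕ, i < m ∧ t₂ = (i:ℝ) * δ)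
    (hs₁ : ∃ j : ℕ, s₁ = (j:ℝ) * δ) (hs₂ : ∃ j : ℕ, s₂ = (j:ℝ) * δ)
    (h : phi m δ t₁ s₁ = phi m δ t₂ s₂) :
    t₁ = t₂ :=
  phi_determines_t_general δ m t₁ t₂ s₁ s₂ ht₁ ht₂ hs₁ hs₂ h
end
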